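/- The sentence φ_k is logically equivalent to an ∃^{k+1}∀³ sentence, i.e., to a prenex sentence of the form ∃x₁…∃x_{k+1} ∀y₁∀y₂∀y₃ ψ with ψ quantifier-free; in particular, each of ξ₁ and ξ₃ is expressible by a ∀³ sentence, ξ₂ by a ∀¹ sentence, and ξ₅ by a ∀^{k+1} sentence. -/

import Mathlib

/-
ξ₁, ξ₂ and ξ₃ are universal, so only ¬(ξ₄ ∧ ξ₅) = ¬ξ₄ ∨ ¬ξ₅ needs work. ¬ξ₄ asks for some x ≠ d
without an S-successor, ¬ξ₅ for k+1 distinct elements of P. Both fit in a single block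
∃x₀…x_k ∀y: either x₀ ≠ d and ¬S(x₀, y), or the xᵢ are distinct elements of P; a witness of ¬ξ₄
is turned into one of the block by taking all xᵢ equal to it.
-/

open FirstOrder Language

namespace LTFinite

/-- Relation symbols of the vocabulary `τ = {≤, S, P, c, d}`: binary `≤` and `S`, unary `P`. -/
inductive TauRel : ℕ → Type
  | le : TauRel 2
  | succ : TauRel 2
  | pelt : TauRel 1

/-- Function symbols of `τ`: the constants `c` and `d`. -/
inductive TauFun : ℕ → Type
  | c : TauFun 0
  | d : TauFun 0

/-- The vocabulary `τ = {≤, S, P, c, d}`. -/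
def tau : FirstOrder.Language := ⟨TauFun, TauRel⟩

/-- The atomic formula `t₁ ≤ t₂`. -/
def leF {n : ℕ} (t₁ t₂ : tau.Term (Empty ⊕ Fin n)) : tau.BoundedFormula Empty n :=
  Relations.boundedFormula₂ (TauRel.le : tau.Relations 2) t₁ t₂

/-- The atomic formula `S(t₁, t₂)`. -/
def sF {n : ℕ} (t₁ t₂ : tau.Term (Empty ⊕ Fin n)) : tau.BoundedFormula Empty n :=
  Relations.boundedFormula₂ (TauRel.succ : tau.Relations 2) t₁ t₂

/-- The atomic formula `P(t)`. -/
def pF {n : ℕ} (t : tau.Term (Empty ⊕ Fin n)) : tau.BoundedFormula Empty n :=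
  Relations.boundedFormula₁ (TauRel.pelt : tau.Relations 1) t

/-- The constant term `c`. -/
def cT {n : ℕ} : tau.Term (Empty ⊕ Fin n) := Constants.term TauFun.c

/-- The constant term `d`. -/
def dT {n : ℕ} : tau.Term (Empty ⊕ Fin n) := Constants.term TauFun.d

/-- `ξ₁`: `≤` is a (reflexive) linear order. -/
def xi1 : tau.Sentence :=
  ∀' ∀' ∀' ((leF &0 &0) ⊓ (((leF &0 &1) ⊓ (leF &1 &2)) ⟹ (leF &0 &2)) ⊓
    (((leF &0 &1) ⊓ (leF &1 &0)) ⟹ Term.bdEqual (&0) (&1)) ⊓ ((leF &0 &1) ⊔ (leF &1 &0)))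

/-- `ξ₂`: `c` is minimum and `d` is maximum under `≤`. -/
def xi2 : tau.Sentence :=
  ∀' ((leF cT &0) ⊓ (leF &0 dT))

/-- `ξ₃`: `S(x, y)` implies that `y` is the successor of `x` under `≤`. -/
def xi3 : tau.Sentence :=
  ∀' ∀' ∀' ((sF &0 &1) ⟹
    ((leF &0 &1) ⊓ ∼(Term.bdEqual (&0) (&1)) ⊓ ((leF &0 &2) ⟹ ((Term.bdEqual (&2) (&0)) ⊔ (leF &1 &2)))))

/-- `ξ₄`: every element other than `d` has an `S`-successor. -/
def xi4 : tau.Sentence :=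
  ∀' ((∼(Term.bdEqual (&0) dT)) ⟹ ∃' (sF &0 &1))

/-- `ξ₅ k`: at most `k` elements satisfy `P`. -/
def xi5 (k : ℕ) : tau.Sentence :=
  ((List.ofFn fun i : Fin (k + 1) => pF (Term.var (Sum.inr i))).foldr (· ⊓ ·) ⊤ ⟹
      (((List.finRange (k + 1) ×ˢ List.finRange (k + 1)).filter (fun ij => ij.1 < ij.2)).map
          fun ij => Term.bdEqual (Term.var (Sum.inr ij.1)) (Term.var (Sum.inr ij.2))).foldr
        (· ⊔ ·) ⊥).alls

/-- The sentence `φ_k := (ξ₁ ∧ ξ₂ ∧ ξ₃) ∧ ¬(ξ₄ ∧ ξ₅)`. -/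
def phi (k : ℕ) : tau.Sentence :=
  (xi1 ⊓ xi2 ⊓ xi3) ⊓ ∼(xi4 ⊓ xi5 k)

/-- Universally quantify over the last `n` free (de Bruijn) variables of a bounded formula,
leaving the first `k` variables free. -/
def allsFrom (k : ℕ) : ∀ {n : ℕ}, tau.BoundedFormula Empty (k + n) → tau.BoundedFormula Empty k
  | 0, ψ => ψ
  | _ + 1, ψ => allsFrom k ψ.all

/-- The `∃^k∀*` sentence `∃x₁…∃x_k ∀y₁…∀y_n ψ` built from a quantifier-free matrix `ψ`. -/
def existsForallSentence (k n : ℕ) (ψ : tau.BoundedFormula Empty (k + n)) : tau.Sentence :=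
  (allsFrom k ψ).exs

universe w

theorem _root_.FirstOrder.Language.BoundedFormula.IsQF.foldr_inf {L : Language} {α : Type*}
    {n : ℕ} {l : List (L.BoundedFormula α n)} (h : ∀ φ ∈ l, φ.IsQF) :
    (l.foldr (· ⊓ ·) ⊤).IsQF := by
  induction l with
  | nil => exact BoundedFormula.IsQF.top
  | cons φ l ih => exact (h φ (by simp)).inf (ih fun ψ hψ => h ψ (by simp [hψ]))

theorem _root_.FirstOrder.Language.BoundedFormula.IsQF.foldr_sup {L : Language} {α : Type*}
    {n : ℕ} {l : List (L.BoundedFormula α n)} (h : ∀ φ ∈ l, φ.IsQF) :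
    (l.foldr (· ⊔ ·) ⊥).IsQF := by
  induction l with
  | nil => exact BoundedFormula.isQF_bot
  | cons φ l ih => exact (h φ (by simp)).sup (ih fun ψ hψ => h ψ (by simp [hψ]))

theorem realize_allsFrom {M : Type*} [tau.Structure M] (k : ℕ) :
    ∀ {n : ℕ} (ψ : tau.BoundedFormula Empty (k + n)) (v : Empty → M) (xs : Fin k → M),
      (allsFrom k ψ).Realize v xs ↔ ∀ zs : Fin n → M, ψ.Realize v (Fin.append xs zs)
  | 0, ψ, v, xs => by simp [allsFrom, Fin.append_right_nil]
  | n + 1, ψ, v, xs => by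
    rw [allsFrom, realize_allsFrom k (n := n)]
    simp only [BoundedFormula.realize_all, ← Fin.append_snoc]
    exact ⟨fun h zs => Fin.snoc_init_self zs ▸ h _ _, fun h zs z => h (Fin.snoc zs z)⟩

section Templates

variable {n : ℕ}

def linearOrderAx (t₁ t₂ t₃ : tau.Term (Empty ⊕ Fin n)) : tau.BoundedFormula Empty n :=
  (leF t₁ t₁) ⊓ (((leF t₁ t₂) ⊓ (leF t₂ t₃)) ⟹ (leF t₁ t₃)) ⊓
    (((leF t₁ t₂) ⊓ (leF t₂ t₁)) ⟹ Term.bdEqual t₁ t₂) ⊓ ((leF t₁ t₂) ⊔ (leF t₂ t₁))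

def endpointsAx (t : tau.Term (Empty ⊕ Fin n)) : tau.BoundedFormula Empty n :=
  (leF cT t) ⊓ (leF t dT)

def successorAx (t₁ t₂ t₃ : tau.Term (Empty ⊕ Fin n)) : tau.BoundedFormula Empty n :=
  (sF t₁ t₂) ⟹
    ((leF t₁ t₂) ⊓ ∼(Term.bdEqual t₁ t₂) ⊓ ((leF t₁ t₃) ⟹ ((Term.bdEqual t₃ t₁) ⊔ (leF t₂ t₃))))

def atMostAx (k : ℕ) (t : Fin (k + 1) → tau.Term (Empty ⊕ Fin n)) : tau.BoundedFormula Empty n :=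
  (List.ofFn fun i => pF (t i)).foldr (· ⊓ ·) ⊤ ⟹
    (((List.finRange (k + 1) ×ˢ List.finRange (k + 1)).filter (fun ij => ij.1 < ij.2)).map
        fun ij => Term.bdEqual (t ij.1) (t ij.2)).foldr (· ⊔ ·) ⊥

theorem isQF_leF (t₁ t₂ : tau.Term (Empty ⊕ Fin n)) : (leF t₁ t₂).IsQF :=
  (BoundedFormula.IsAtomic.rel _ _).isQF

theorem isQF_sF (t₁ t₂ : tau.Term (Empty ⊕ Fin n)) : (sF t₁ t₂).IsQF :=
  (BoundedFormula.IsAtomic.rel _ _).isQF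

theorem isQF_pF (t : tau.Term (Empty ⊕ Fin n)) : (pF t).IsQF :=
  (BoundedFormula.IsAtomic.rel _ _).isQF

theorem isQF_bdEqual (t₁ t₂ : tau.Term (Empty ⊕ Fin n)) : (Term.bdEqual t₁ t₂).IsQF :=
  (BoundedFormula.IsAtomic.equal _ _).isQF

theorem isQF_linearOrderAx (t₁ t₂ t₃ : tau.Term (Empty ⊕ Fin n)) :
    (linearOrderAx t₁ t₂ t₃).IsQF :=
  (((isQF_leF _ _).inf (((isQF_leF _ _).inf (isQF_leF _ _)).imp (isQF_leF _ _))).inf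
    (((isQF_leF _ _).inf (isQF_leF _ _)).imp (isQF_bdEqual _ _))).inf
    ((isQF_leF _ _).sup (isQF_leF _ _))

theorem isQF_endpointsAx (t : tau.Term (Empty ⊕ Fin n)) : (endpointsAx t).IsQF :=
  (isQF_leF _ _).inf (isQF_leF _ _)

theorem isQF_successorAx (t₁ t₂ t₃ : tau.Term (Empty ⊕ Fin n)) :
    (successorAx t₁ t₂ t₃).IsQF :=
  (isQF_sF _ _).imp (((isQF_leF _ _).inf (isQF_bdEqual _ _).not).inf
    ((isQF_leF _ _).imp ((isQF_bdEqual _ _).sup (isQF_leF _ _))))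

theorem isQF_atMostAx (k : ℕ) (t : Fin (k + 1) → tau.Term (Empty ⊕ Fin n)) :
    (atMostAx k t).IsQF := by
  refine (BoundedFormula.IsQF.foldr_inf ?_).imp (BoundedFormula.IsQF.foldr_sup ?_)
  · simp only [List.mem_ofFn, forall_exists_index]
    rintro _ i rfl
    exact isQF_pF _
  · simp only [List.mem_map, forall_exists_index, and_imp]
    rintro _ ij - rfl
    exact isQF_bdEqual _ _

theorem xi1_eq : xi1 = (linearOrderAx (n := 3) &0 &1 &2).alls := rfl
theorem xi2_eq : xi2 = (endpointsAx (n := 1) &0).alls := rfl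
theorem xi3_eq : xi3 = (successorAx (n := 3) &0 &1 &2).alls := rfl
theorem xi5_eq (k : ℕ) : xi5 k = (atMostAx k fun i => &i).alls := rfl

end Templates

theorem not_injective_iff_exists_lt {ι β : Type*} [LinearOrder ι] {f : ι → β} :
    ¬Function.Injective f ↔ ∃ i j, i < j ∧ f i = f j :=
  ⟨fun h => by_contra fun h' => h (.of_lt_imp_ne fun i j hij heq => h' ⟨i, j, hij, heq⟩),
    fun ⟨_, _, hij, heq⟩ hf => hij.ne (hf heq)⟩

section Semantics

variable (M : Type*) [tau.Structure M]

def cM : M := constantMap (L := tau) TauFun.c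
def dM : M := constantMap (L := tau) TauFun.d

variable {M}

def LeM (a b : M) : Prop := Structure.RelMap (L := tau) TauRel.le ![a, b]
def SuccM (a b : M) : Prop := Structure.RelMap (L := tau) TauRel.succ ![a, b]
def PM (a : M) : Prop := Structure.RelMap (L := tau) TauRel.pelt ![a]

def LinearOrderAt (a b c : M) : Prop :=
  LeM a a ∧ (LeM a b ∧ LeM b c → LeM a c) ∧ (LeM a b ∧ LeM b a → a = b) ∧ (LeM a b ∨ LeM b a)

def BetweenEndpoints (a : M) : Prop := LeM (cM M) a ∧ LeM a (dM M)

def SuccessorAt (a b c : M) : Prop :=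
  SuccM a b → LeM a b ∧ a ≠ b ∧ (LeM a c → c = a ∨ LeM b c)

def DistinctInP {ι : Type*} (xs : ι → M) : Prop := (∀ i, PM (xs i)) ∧ Function.Injective xs

variable {n : ℕ} (v : Empty → M) (xs : Fin n → M)

@[simp] theorem realize_leF (t₁ t₂ : tau.Term (Empty ⊕ Fin n)) :
    (leF t₁ t₂).Realize v xs ↔ LeM (t₁.realize (Sum.elim v xs)) (t₂.realize (Sum.elim v xs)) :=
  BoundedFormula.realize_rel₂

@[simp] theorem realize_sF (t₁ t₂ : tau.Term (Empty ⊕ Fin n)) :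
    (sF t₁ t₂).Realize v xs ↔ SuccM (t₁.realize (Sum.elim v xs)) (t₂.realize (Sum.elim v xs)) :=
  BoundedFormula.realize_rel₂

@[simp] theorem realize_pF (t : tau.Term (Empty ⊕ Fin n)) :
    (pF t).Realize v xs ↔ PM (t.realize (Sum.elim v xs)) :=
  BoundedFormula.realize_rel₁

@[simp] theorem realize_cT (w : Empty ⊕ Fin n → M) :
    (cT : tau.Term (Empty ⊕ Fin n)).realize w = cM M :=
  Term.realize_constants

@[simp] theorem realize_dT (w : Empty ⊕ Fin n → M) :
    (dT : tau.Term (Empty ⊕ Fin n)).realize w = dM M :=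
  Term.realize_constants

@[simp] theorem realize_linearOrderAx (t₁ t₂ t₃ : tau.Term (Empty ⊕ Fin n)) :
    (linearOrderAx t₁ t₂ t₃).Realize v xs ↔ LinearOrderAt (t₁.realize (Sum.elim v xs))
      (t₂.realize (Sum.elim v xs)) (t₃.realize (Sum.elim v xs)) := by
  simp only [linearOrderAx, BoundedFormula.realize_inf, BoundedFormula.realize_imp,
    BoundedFormula.realize_sup, BoundedFormula.realize_bdEqual, realize_leF, LinearOrderAt]
  tauto

@[simp] theorem realize_endpointsAx (t : tau.Term (Empty ⊕ Fin n)) :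
    (endpointsAx t).Realize v xs ↔ BetweenEndpoints (t.realize (Sum.elim v xs)) := by
  simp [endpointsAx, BetweenEndpoints]

@[simp] theorem realize_successorAx (t₁ t₂ t₃ : tau.Term (Empty ⊕ Fin n)) :
    (successorAx t₁ t₂ t₃).Realize v xs ↔ SuccessorAt (t₁.realize (Sum.elim v xs))
      (t₂.realize (Sum.elim v xs)) (t₃.realize (Sum.elim v xs)) := by
  simp only [successorAx, BoundedFormula.realize_inf, BoundedFormula.realize_imp,
    BoundedFormula.realize_sup, BoundedFormula.realize_not, BoundedFormula.realize_bdEqual,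
    realize_leF, realize_sF, SuccessorAt]
  tauto

@[simp] theorem realize_atMostAx (k : ℕ) (t : Fin (k + 1) → tau.Term (Empty ⊕ Fin n)) :
    (atMostAx k t).Realize v xs ↔ ¬DistinctInP fun i => (t i).realize (Sum.elim v xs) := by
  simp only [atMostAx, BoundedFormula.realize_imp, BoundedFormula.realize_foldr_inf,
    List.forall_mem_ofFn_iff, realize_pF]
  simp [DistinctInP, not_injective_iff_exists_lt]

end Semantics

theorem forall_fin_three_iff {α : Type*} {p : α → α → α → Prop} :
    (∀ zs : Fin 3 → α, p (zs 0) (zs 1) (zs 2)) ↔ ∀ a b c, p a b c :=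
  ⟨fun h a b c => h ![a, b, c], fun h _ => h _ _ _⟩

section Sentences

variable {M : Type*} [tau.Structure M]

theorem realize_xi1 : M ⊨ xi1 ↔ ∀ a b c : M, LinearOrderAt a b c := by
  simp [xi1_eq, Sentence.Realize, forall_fin_three_iff]

theorem realize_xi2 : M ⊨ xi2 ↔ ∀ a : M, BetweenEndpoints a := by
  simp [xi2_eq, Sentence.Realize, Fin.forall_fin_succ_pi]

theorem realize_xi3 : M ⊨ xi3 ↔ ∀ a b c : M, SuccessorAt a b c := by
  simp [xi3_eq, Sentence.Realize, forall_fin_three_iff]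

theorem realize_xi4 : M ⊨ xi4 ↔ ∀ a : M, a ≠ dM M → ∃ b, SuccM a b := by
  simp only [xi4, Sentence.Realize, Formula.Realize, BoundedFormula.realize_all,
    BoundedFormula.realize_imp, BoundedFormula.realize_not, BoundedFormula.realize_bdEqual,
    BoundedFormula.realize_ex, realize_dT, realize_sF, ne_eq]
  rfl

theorem realize_xi5 (k : ℕ) : M ⊨ xi5 k ↔ ¬∃ xs : Fin (k + 1) → M, DistinctInP xs := by
  simp [xi5_eq, Sentence.Realize]

theorem realize_phi (k : ℕ) : M ⊨ phi k ↔
    ((∀ a b c : M, LinearOrderAt a b c) ∧ (∀ a : M, BetweenEndpoints a) ∧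
      ∀ a b c : M, SuccessorAt a b c) ∧
    ¬((∀ a : M, a ≠ dM M → ∃ b, SuccM a b) ∧ ¬∃ xs : Fin (k + 1) → M, DistinctInP xs) := by
  simp only [phi, Sentence.realize_inf, Sentence.realize_not, realize_xi1, realize_xi2,
    realize_xi3, realize_xi4, realize_xi5, and_assoc]

end Sentences

theorem exists_forall_or_iff_not_and {ι α : Type*} (i₀ : ι) {R : α → Prop} {S : α → α → Prop}
    {Q : (ι → α) → Prop} :
    (∃ xs : ι → α, ∀ y, (R (xs i₀) ∧ ¬S (xs i₀) y) ∨ Q xs) ↔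
      ¬((∀ x, R x → ∃ y, S x y) ∧ ¬∃ xs, Q xs) := by
  constructor
  · rintro ⟨xs, h⟩ ⟨hS, hQ⟩
    have hxs : ∀ y, R (xs i₀) ∧ ¬S (xs i₀) y := fun y => (h y).resolve_right fun q => hQ ⟨xs, q⟩
    obtain ⟨y, hy⟩ := hS _ (hxs (xs i₀)).1
    exact (hxs y).2 hy
  · intro h
    by_cases hQ : ∃ xs, Q xs
    · obtain ⟨xs, hxs⟩ := hQ
      exact ⟨xs, fun _ => .inr hxs⟩
    · obtain ⟨x, hR, hS⟩ : ∃ x, R x ∧ ∀ y, ¬S x y := by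
        simpa [hQ] using h
      exact ⟨fun _ => x, fun y => .inl ⟨hR, hS y⟩⟩

-- In `existsForallSentence (k + 1) 3 ψ` the first `k + 1` variables of `ψ` are existential and
-- the last three universal.
def xVar (k : ℕ) (i : Fin (k + 1)) : tau.Term (Empty ⊕ Fin ((k + 1) + 3)) :=
  &(Fin.castAdd 3 i)

def yVar (k : ℕ) (j : Fin 3) : tau.Term (Empty ⊕ Fin ((k + 1) + 3)) :=
  &(Fin.natAdd (k + 1) j)

def psi (k : ℕ) : tau.BoundedFormula Empty ((k + 1) + 3) :=
  linearOrderAx (yVar k 0) (yVar k 1) (yVar k 2) ⊓ endpointsAx (yVar k 0) ⊓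
      successorAx (yVar k 0) (yVar k 1) (yVar k 2) ⊓
    ((∼(Term.bdEqual (xVar k 0) dT) ⊓ ∼(sF (xVar k 0) (yVar k 0))) ⊔ ∼(atMostAx k (xVar k)))

theorem isQF_psi (k : ℕ) : (psi k).IsQF :=
  ((((isQF_linearOrderAx _ _ _).inf (isQF_endpointsAx _)).inf (isQF_successorAx _ _ _)).inf
    ((((isQF_bdEqual _ _).not.inf (isQF_sF _ _).not)).sup (isQF_atMostAx _ _).not))

theorem realize_existsForallSentence_psi {M : Type*} [tau.Structure M] (k : ℕ) :
    M ⊨ existsForallSentence (k + 1) 3 (psi k) ↔ ∃ xs : Fin (k + 1) → M, ∀ a b c : M,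
      (LinearOrderAt a b c ∧ BetweenEndpoints a ∧ SuccessorAt a b c) ∧
        ((xs 0 ≠ dM M ∧ ¬SuccM (xs 0) a) ∨ DistinctInP xs) := by
  simp only [existsForallSentence, Sentence.Realize, BoundedFormula.realize_exs, realize_allsFrom,
    psi, xVar, yVar, BoundedFormula.realize_inf, BoundedFormula.realize_sup,
    BoundedFormula.realize_not, BoundedFormula.realize_bdEqual, Function.comp_apply,
    Term.realize_var, Sum.elim_inr,
    Fin.append_left, Fin.append_right, realize_dT, realize_sF, realize_linearOrderAx,
    realize_endpointsAx, realize_successorAx, realize_atMostAx, not_not, ne_eq]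
  simp only [← forall_fin_three_iff, and_assoc]

/-- **`φ_k` is logically equivalent to an `∃^{k+1}∀³` sentence**, i.e., to a prenex sentence
`∃x₁…∃x_{k+1} ∀y₁∀y₂∀y₃ ψ` with `ψ` quantifier-free; in particular, each of `ξ₁` and `ξ₃` is
expressible by a `∀³` sentence, `ξ₂` by a `∀¹` sentence, and `ξ₅` by a `∀^{k+1}` sentence
(logical equivalence meaning satisfaction by exactly the same nonempty `τ`-structures). -/
theorem phi_equivalent_to_exists_k_succ_forall_three (k : ℕ) :
    (∃ ψ : tau.BoundedFormula Empty ((k + 1) + 3), ψ.IsQF ∧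
      ∀ (M : Type w) [tau.Structure M] [Nonempty M],
        (M ⊨ phi k ↔ M ⊨ existsForallSentence (k + 1) 3 ψ)) ∧
    (∃ ψ : tau.BoundedFormula Empty 3, ψ.IsQF ∧
      ∀ (M : Type w) [tau.Structure M] [Nonempty M], (M ⊨ xi1 ↔ M ⊨ ψ.alls)) ∧
    (∃ ψ : tau.BoundedFormula Empty 3, ψ.IsQF ∧
      ∀ (M : Type w) [tau.Structure M] [Nonempty M], (M ⊨ xi3 ↔ M ⊨ ψ.alls)) ∧
    (∃ ψ : tau.BoundedFormula Empty 1, ψ.IsQF ∧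
      ∀ (M : Type w) [tau.Structure M] [Nonempty M], (M ⊨ xi2 ↔ M ⊨ ψ.alls)) ∧
    (∃ ψ : tau.BoundedFormula Empty (k + 1), ψ.IsQF ∧
      ∀ (M : Type w) [tau.Structure M] [Nonempty M], (M ⊨ xi5 k ↔ M ⊨ ψ.alls)) := by
  refine ⟨⟨psi k, isQF_psi k, fun M _ _ => ?_⟩,
    ⟨linearOrderAx &0 &1 &2, isQF_linearOrderAx _ _ _, fun M _ _ => by rw [xi1_eq]⟩,
    ⟨successorAx &0 &1 &2, isQF_successorAx _ _ _, fun M _ _ => by rw [xi3_eq]⟩,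
    ⟨endpointsAx &0, isQF_endpointsAx _, fun M _ _ => by rw [xi2_eq]⟩,
    ⟨atMostAx k fun i => &i, isQF_atMostAx k _, fun M _ _ => by rw [xi5_eq]⟩⟩
  rw [realize_phi, realize_existsForallSentence_psi]
  simp only [forall_and, forall_const, exists_and_left]
  exact and_congr .rfl (exists_forall_or_iff_not_and 0).symm

end LTFinite
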